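/- Let k be a positive definite kernel on a set X, σ² > 0, and for points x₁,…,x_t define the posterior kernel k_t(a,b) = k(a,b) - k(a,X_t)(k(X_t,X_t)+σ²I_t)⁻¹k(X_t,b). Then for any additional points x_{t+1},…,x_{t+m} (collected in X̄), the posterior kernel after t+m points satisfies k_{t+m}(a,b) = k_t(a,b) - k_t(a,X̄)(k_t(X̄,X̄)+σ²I_m)⁻¹k_t(X̄,b). -/
import Mathlib
open Matrix

section Helpers

lemma smul_one_posDef' {n : Type*} [Fintype n] [DecidableEq n] {c : ℝ} (hc : 0 < c) :
    (c • (1 : Matrix n n ℝ)).PosDef := by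
  rw [smul_one_eq_diagonal]
  exact posDef_diagonal_iff.mpr fun _ => hc

lemma real_conjTranspose' {a b : Type*} (B : Matrix a b ℝ) : Bᴴ = Bᵀ := by
  ext i j; simp [conjTranspose_apply]

lemma key' {a b : Type*} [Fintype a] [Fintype b]
    (Ai : Matrix a a ℝ) (B : Matrix a b ℝ) (E : Matrix b b ℝ)
    (hAi : Aiᵀ = Ai)
    (u1 w1 : a → ℝ) (u2 w2 : b → ℝ) :
    u1 ⬝ᵥ ((Ai + Ai * B * E * Bᵀ * Ai) *ᵥ w1 + -(Ai * B * E) *ᵥ w2) +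
      u2 ⬝ᵥ (-(E * Bᵀ * Ai) *ᵥ w1 + E *ᵥ w2) =
    u1 ⬝ᵥ (Ai *ᵥ w1) +
      (u2 - Bᵀ *ᵥ (Ai *ᵥ u1)) ⬝ᵥ (E *ᵥ (w2 - Bᵀ *ᵥ (Ai *ᵥ w1))) := by
  have h1 : ∀ (v : a → ℝ) (P : Matrix b a ℝ) (w : a → ℝ), (Bᵀ *ᵥ (Ai *ᵥ v)) ⬝ᵥ (E * P) *ᵥ w
      = v ⬝ᵥ (Ai * B * E * P) *ᵥ w := by
    intro v P w
    rw [dotProduct_mulVec, dotProduct_mulVec, ← mulVec_transpose, ← mulVec_transpose]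
    simp [mulVec_mulVec, Matrix.transpose_mul, hAi, Matrix.mul_assoc]
  have h2 : ∀ (v : a → ℝ) (w : b → ℝ), (Bᵀ *ᵥ (Ai *ᵥ v)) ⬝ᵥ E *ᵥ w
      = v ⬝ᵥ (Ai * B * E) *ᵥ w := by
    intro v w
    rw [dotProduct_mulVec, dotProduct_mulVec, ← mulVec_transpose, ← mulVec_transpose]
    simp [mulVec_mulVec, Matrix.transpose_mul, hAi, Matrix.mul_assoc]
  have e1 : E *ᵥ (w2 - Bᵀ *ᵥ (Ai *ᵥ w1)) = E *ᵥ w2 - (E * (Bᵀ * Ai)) *ᵥ w1 := by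
    rw [mulVec_sub, mulVec_mulVec, mulVec_mulVec, Matrix.mul_assoc]
  rw [e1]
  simp only [sub_dotProduct, dotProduct_sub, dotProduct_add, add_mulVec, neg_mulVec,
    dotProduct_neg, h1, h2, Matrix.mul_assoc]
  ring

end Helpers

theorem posterior_kernel_recursion {X : Type*} (k : X → X → ℝ)
    (hsymm : ∀ a b : X, k a b = k b a)
    (hpsd : ∀ (n : ℕ) (z : Fin n → X),
      (Matrix.of fun i j : Fin n => k (z i) (z j)).PosSemidef)
    (σ2 : ℝ) (hσ : 0 < σ2)
    {t m : ℕ} (Xt : Fin t → X) (Xbar : Fin m → X) :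
    -- posterior kernel after conditioning on the t points Xt
    let kt : X → X → ℝ := fun a b =>
      k a b -
        (fun i => k a (Xt i)) ⬝ᵥ
          ((Matrix.of fun i j : Fin t => k (Xt i) (Xt j)) + σ2 • (1 : Matrix (Fin t) (Fin t) ℝ))⁻¹ *ᵥ
          (fun j => k (Xt j) b)
    -- posterior kernel after conditioning on all t + m points
    let p : Fin t ⊕ Fin m → X := Sum.elim Xt Xbar
    let ktm : X → X → ℝ := fun a b =>
      k a b -
        (fun i => k a (p i)) ⬝ᵥ
          ((Matrix.of fun i j : Fin t ⊕ Fin m => k (p i) (p j)) +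
              σ2 • (1 : Matrix (Fin t ⊕ Fin m) (Fin t ⊕ Fin m) ℝ))⁻¹ *ᵥ
          (fun j => k (p j) b)
    ∀ a b : X,
      ktm a b =
        kt a b -
          (fun i => kt a (Xbar i)) ⬝ᵥ
            ((Matrix.of fun i j : Fin m => kt (Xbar i) (Xbar j)) +
                σ2 • (1 : Matrix (Fin m) (Fin m) ℝ))⁻¹ *ᵥ
            (fun j => kt (Xbar j) b) := by
  intro kt p ktm a b
  classical
  simp only [kt, ktm, p]
  set A : Matrix (Fin t) (Fin t) ℝ :=
    (Matrix.of fun i j : Fin t => k (Xt i) (Xt j)) + σ2 • 1 with hAdef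
  set B : Matrix (Fin t) (Fin m) ℝ := Matrix.of fun i j => k (Xt i) (Xbar j) with hBdef
  set D0 : Matrix (Fin m) (Fin m) ℝ := Matrix.of fun i j => k (Xbar i) (Xbar j) with hD0def
  set D : Matrix (Fin m) (Fin m) ℝ := D0 + σ2 • 1 with hDdef
  have hBk : ∀ (i : Fin m) (j : Fin t), k (Xbar i) (Xt j) = k (Xt j) (Xbar i) :=
    fun i j => hsymm _ _
  have hA : A.PosDef := Matrix.PosDef.posSemidef_add (hpsd t Xt) (smul_one_posDef' hσ)
  haveI instA : Invertible A := invertibleOfIsUnitDet A hA.det_pos.ne'.isUnit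
  have hG : (Matrix.of fun i j : Fin t ⊕ Fin m => k (p i) (p j)).PosSemidef := by
    have h2 := (hpsd (t + m) (p ∘ finSumFinEquiv.symm)).submatrix
      (finSumFinEquiv : Fin t ⊕ Fin m ≃ Fin (t + m))
    have heq : ((Matrix.of fun i j : Fin (t + m) =>
        k ((p ∘ finSumFinEquiv.symm) i) ((p ∘ finSumFinEquiv.symm) j)).submatrix
          finSumFinEquiv finSumFinEquiv)
        = (Matrix.of fun i j : Fin t ⊕ Fin m => k (p i) (p j)) := by
      ext i j; simp
    rwa [heq] at h2
  have hN : (fromBlocks A B Bᵀ D0).PosSemidef := by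
    have heq : fromBlocks A B Bᵀ D0
        = (Matrix.of fun i j : Fin t ⊕ Fin m => k (p i) (p j))
          + Matrix.diagonal (Sum.elim (fun _ => σ2) (fun _ => (0 : ℝ))) := by
      ext i j
      rcases i with i | i <;> rcases j with j | j <;>
        simp [hAdef, hBdef, hD0def, fromBlocks, Matrix.diagonal_apply, Matrix.one_apply,
          Matrix.add_apply, hBk, p, mul_comm]
    rw [heq]
    exact hG.add (posSemidef_diagonal_iff.mpr (by rintro (i | i) <;> simp [hσ.le]))
  have hSchur0 : (D0 - Bᵀ * A⁻¹ * B).PosSemidef := by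
    have h3 := Matrix.PosDef.fromBlocks₁₁ B D0 hA
    rw [real_conjTranspose'] at h3
    exact h3.mp hN
  have hS : (D - Bᵀ * A⁻¹ * B).PosDef := by
    have heq : D - Bᵀ * A⁻¹ * B = (D0 - Bᵀ * A⁻¹ * B) + σ2 • 1 := by
      rw [hDdef]; abel
    rw [heq]
    exact Matrix.PosDef.posSemidef_add hSchur0 (smul_one_posDef' hσ)
  haveI instS : Invertible (D - Bᵀ * A⁻¹ * B) := invertibleOfIsUnitDet _ hS.det_pos.ne'.isUnit
  haveI instS' : Invertible (D - Bᵀ * ⅟A * B) := by rw [invOf_eq_nonsing_inv]; exact instS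
  haveI instM : Invertible (fromBlocks A B Bᵀ D) := fromBlocks₁₁Invertible A B Bᵀ D
  have hMinv : (fromBlocks A B Bᵀ D)⁻¹ =
      fromBlocks (A⁻¹ + A⁻¹ * B * (D - Bᵀ * A⁻¹ * B)⁻¹ * Bᵀ * A⁻¹)
        (-(A⁻¹ * B * (D - Bᵀ * A⁻¹ * B)⁻¹))
        (-((D - Bᵀ * A⁻¹ * B)⁻¹ * Bᵀ * A⁻¹)) ((D - Bᵀ * A⁻¹ * B)⁻¹) := by
    rw [← invOf_eq_nonsing_inv (fromBlocks A B Bᵀ D), invOf_fromBlocks₁₁_eq]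
    simp_rw [invOf_eq_nonsing_inv]
  have hAinvT : (A⁻¹)ᵀ = A⁻¹ := by
    have h4 : (A⁻¹).IsHermitian := hA.1.inv
    rwa [Matrix.IsHermitian, real_conjTranspose'] at h4
  -- the big sum-indexed matrix is the block matrix
  have hM : (Matrix.of fun i j : Fin t ⊕ Fin m => k (p i) (p j)) +
      σ2 • (1 : Matrix (Fin t ⊕ Fin m) (Fin t ⊕ Fin m) ℝ) = fromBlocks A B Bᵀ D := by
    ext i j
    rcases i with i | i <;> rcases j with j | j <;>
      simp [hAdef, hBdef, hD0def, hDdef, fromBlocks, Matrix.one_apply, Matrix.add_apply,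
        hBk, p, mul_comm]
  set E : Matrix (Fin m) (Fin m) ℝ := (D - Bᵀ * A⁻¹ * B)⁻¹ with hEdef
  set u1 : Fin t → ℝ := fun i => k a (Xt i) with hu1
  set u2 : Fin m → ℝ := fun i => k a (Xbar i) with hu2
  set w1 : Fin t → ℝ := fun j => k (Xt j) b with hw1
  set w2 : Fin m → ℝ := fun j => k (Xbar j) b with hw2
  have hu : (fun i => k a (p i)) = Sum.elim u1 u2 := by funext x; cases x <;> rfl
  have hw : (fun j => k (p j) b) = Sum.elim w1 w2 := by funext x; cases x <;> rfl
  rw [hM, hMinv, hu, hw, fromBlocks_mulVec, sumElim_dotProduct_sumElim, key' A⁻¹ B E hAinvT]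
  -- now handle the right-hand side
  have hdot : ∀ (v : Fin t → ℝ) (c : Fin t → ℝ), v ⬝ᵥ (A⁻¹ *ᵥ c) = (A⁻¹ *ᵥ v) ⬝ᵥ c := by
    intro v c
    rw [dotProduct_mulVec]
    conv_lhs => rw [← hAinvT]
    rw [vecMul_transpose]
  have hvkt : (fun i => k a (Xbar i) - u1 ⬝ᵥ A⁻¹ *ᵥ fun j => k (Xt j) (Xbar i))
      = u2 - Bᵀ *ᵥ (A⁻¹ *ᵥ u1) := by
    funext i
    have : u1 ⬝ᵥ (A⁻¹ *ᵥ fun j => k (Xt j) (Xbar i)) = (Bᵀ *ᵥ (A⁻¹ *ᵥ u1)) i := by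
      rw [hdot]
      simp [mulVec, dotProduct, hBdef, mul_comm]
    simp [this, hu2]
  have hzkt : (fun j => k (Xbar j) b - (fun i => k (Xbar j) (Xt i)) ⬝ᵥ A⁻¹ *ᵥ w1)
      = w2 - Bᵀ *ᵥ (A⁻¹ *ᵥ w1) := by
    funext j
    have : (fun i => k (Xbar j) (Xt i)) ⬝ᵥ (A⁻¹ *ᵥ w1) = (Bᵀ *ᵥ (A⁻¹ *ᵥ w1)) j := by
      simp [mulVec, dotProduct, hBdef, hBk, mul_comm]
    simp [this, hw2]
  have hSmat : (Matrix.of fun i j : Fin m =>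
        k (Xbar i) (Xbar j) - (fun l => k (Xbar i) (Xt l)) ⬝ᵥ A⁻¹ *ᵥ fun l => k (Xt l) (Xbar j))
      + σ2 • (1 : Matrix (Fin m) (Fin m) ℝ) = D - Bᵀ * A⁻¹ * B := by
    ext i j
    have : (fun l => k (Xbar i) (Xt l)) ⬝ᵥ (A⁻¹ *ᵥ fun l => k (Xt l) (Xbar j))
        = (Bᵀ * A⁻¹ * B) i j := by
      simp only [Matrix.mul_apply, mulVec, dotProduct, hBdef, transpose_apply, of_apply,
        Finset.mul_sum, Finset.sum_mul, hBk]
      rw [Finset.sum_comm]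
      exact Finset.sum_congr rfl fun l _ => Finset.sum_congr rfl fun r _ => by ring
    simp only [Matrix.add_apply, Matrix.sub_apply, Matrix.smul_apply, of_apply, this,
      hDdef, hD0def, smul_eq_mul]
    ring
  rw [hvkt, hzkt, hSmat, ← hEdef]
  simp only [Sum.elim_comp_inl, Sum.elim_comp_inr]
  ring
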